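/- Suppose in a multi-agent modular model M at world w there exists an explanation E with claim(E) = F that agent 2 understands and agent 1 is aware of, and suppose the total number of explanations for F available to agent 1 is finite. Then there exists a finite conversation history η = (1:?F)(2:E_1)(1:F(E_1))···(2:E_n)(1:F(E_n)), where each E_k is a most preferred explanation with respect to the prefix pre(η,k−1), such that after the sequence of updates agent 2 has a ground derived term t justifying F (M,w ⊨ [2:E_n]···[1:F(E_1)][2:E_1][[t]]_2 F) and all nodes of the final feedback F(E_n) have value 1. -/

import Mathlib

open Classical

/-- Propositional formulas. -/
inductive PropForm : Type
  | atom : ℕ → PropForm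
  | fls : PropForm
  | imp : PropForm → PropForm → PropForm
  deriving DecidableEq

/-- Justification terms: constants, variables (indexed by a formula and a list
of formulas), and application. -/
inductive Tm : Type
  | const : ℕ → Tm
  | var : PropForm → List PropForm → Tm
  | app : Tm → Tm → Tm
  deriving DecidableEq

/-- Ground terms: terms without variables. -/
def Tm.Ground : Tm → Prop
  | .const _ => True
  | .var _ _ => False
  | .app s t => s.Ground ∧ t.Ground

/-- Subterm relation. -/
def Tm.Subterm (s : Tm) : Tm → Prop
  | .app a b => s = Tm.app a b ∨ s.Subterm a ∨ s.Subterm b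
  | t => s = t

/-- Substitution of a term for a justification variable. -/
def Tm.subst (x : PropForm × List PropForm) (r : Tm) : Tm → Tm
  | .const n => .const n
  | .var F L => if (F, L) = x then r else .var F L
  | .app a b => .app (Tm.subst x r a) (Tm.subst x r b)

/-- `bigImp [A1,…,An] B = A1 → (… → (An → B)…)`. -/
def bigImp (L : List PropForm) (B : PropForm) : PropForm := L.foldr PropForm.imp B

/-- Formulas of the full language 𝓛J. -/
inductive JForm : Type
  | atom : ℕ → JForm
  | fls : JForm
  | imp : JForm → JForm → JForm
  | box : Fin 2 → JForm → JForm
  | just : Fin 2 → Tm → PropForm → JForm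

/-- Embedding of propositional formulas into 𝓛J. -/
def PropForm.toJ : PropForm → JForm
  | .atom n => .atom n
  | .fls => .fls
  | .imp A B => .imp A.toJ B.toJ

/-- A multi-agent frame: agents 0 (explainer, "agent 1") and 1 (explainee,
"agent 2"), worlds, reflexive transitive accessibility relations, evidence
functions, and a valuation. -/
structure Frame where
  W : Type
  ne : Nonempty W
  R : Fin 2 → W → W → Prop
  refl : ∀ i, Reflexive (R i)
  trans : ∀ i, Transitive (R i)
  star : Fin 2 → Tm → W → Set PropForm
  val : ℕ → Set W

/-- Truth of propositional formulas. -/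
def Frame.psat (M : Frame) : M.W → PropForm → Prop := fun w F =>
  match F with
  | .atom n => w ∈ M.val n
  | .fls => False
  | .imp A B => M.psat w A → M.psat w B

/-- Truth for the full language. -/
def Frame.sat (M : Frame) : M.W → JForm → Prop := fun w φ =>
  match φ with
  | .atom n => w ∈ M.val n
  | .fls => False
  | .imp A B => M.sat w A → M.sat w B
  | .box i A => ∀ u, M.R i w u → M.sat u A
  | .just i t F => F ∈ M.star i t w

/-- Justification yields belief (for ground terms). -/
def Frame.JYB (M : Frame) : Prop :=
  ∀ i (t : Tm) w F, t.Ground → F ∈ M.star i t w → ∀ u, M.R i w u → M.psat u F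

/-- Finiteness constraints on evidence functions. -/
def Frame.FinEv (M : Frame) : Prop :=
  (∀ i w, {t : Tm | t.Ground ∧ (M.star i t w).Nonempty}.Finite) ∧
  (∀ i (t : Tm) w, t.Ground → (M.star i t w).Finite)

/-- Multi-agent modular models. -/
def Frame.Modular (M : Frame) : Prop := M.JYB ∧ M.FinEv

/-- Explanations: finite trees of propositional formulas. `node cs B` has
claim `B`; it is a hypothesis (leaf) if `cs = []` and a derived formula
otherwise. -/
inductive Expl : Type
  | node : List Expl → PropForm → Expl

def Expl.claim : Expl → PropForm
  | .node _ B => B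

def Expl.children : Expl → List Expl
  | .node cs _ => cs

/-- Hypotheses (leaves) of an explanation. -/
def Expl.hyps : Expl → List PropForm
  | .node [] B => [B]
  | .node (c :: cs) _ => ((c :: cs).attach).flatMap (fun x => x.1.hyps)
decreasing_by
  have := List.sizeOf_lt_of_mem x.2
  simp only [Expl.node.sizeOf_spec] at *
  omega

/-- Deduction steps of an explanation: pairs (premises, derived formula). -/
def Expl.steps : Expl → List (List PropForm × PropForm)
  | .node [] _ => []
  | .node (c :: cs) B =>
      ((c :: cs).map Expl.claim, B) :: ((c :: cs).attach).flatMap (fun x => x.1.steps)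
decreasing_by
  have := List.sizeOf_lt_of_mem x.2
  simp only [Expl.node.sizeOf_spec] at *
  omega

/-- All subtrees of an explanation (including itself). -/
def Expl.subtrees : Expl → List Expl
  | .node cs B => .node cs B :: (cs.attach).flatMap (fun x => x.1.subtrees)
decreasing_by
  have := List.sizeOf_lt_of_mem x.2
  simp only [Expl.node.sizeOf_spec] at *
  omega

/-- Set of derived formulas of an explanation. -/
def Expl.dset (E : Expl) : Set PropForm := {G | ∃ L, (L, G) ∈ E.steps}

/-- `DTerm M i w E t`: `t` is a derived term of `claim E` with respect to the
explanation `E`, constructed by agent `i` at world `w`.  For a hypothesis the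
"derived term" is a ground justifying term if one exists, and the variable
`x_A` otherwise; for a derived formula it is `d·t₁⋯tₙ` if the agent has a
ground justification `d` of the deduction step, and the variable
`x_B^{Pr(E,B)}` otherwise. -/
inductive DTerm (M : Frame) (i : Fin 2) (w : M.W) : Expl → Tm → Prop
  | hyp_just {A : PropForm} {t : Tm} :
      t.Ground → A ∈ M.star i t w → DTerm M i w (.node [] A) t
  | hyp_var {A : PropForm} :
      (¬ ∃ t : Tm, t.Ground ∧ A ∈ M.star i t w) →
      DTerm M i w (.node [] A) (.var A [])
  | step {cs : List Expl} {B : PropForm} {d : Tm} {ts : List Tm}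
      (hne : cs ≠ []) (hd : d.Ground)
      (hj : bigImp (cs.map Expl.claim) B ∈ M.star i d w)
      (hlen : ts.length = cs.length)
      (hts : List.Forall₂ (DTerm M i w) cs ts) :
      DTerm M i w (.node cs B) (ts.foldl Tm.app d)
  | step_var {cs : List Expl} {B : PropForm} (hne : cs ≠ [])
      (h : ¬ ∃ d : Tm, d.Ground ∧ bigImp (cs.map Expl.claim) B ∈ M.star i d w) :
      DTerm M i w (.node cs B) (.var B (cs.map Expl.claim))

/-- Agent 2 understands `E` at `w` iff its derived term of `claim E` w.r.t.
`E` is ground. -/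
def Understands (M : Frame) (w : M.W) (E : Expl) : Prop :=
  ∃ t : Tm, DTerm M 1 w E t ∧ t.Ground

/-- The updated evidence function of agent 2 after learning from explanation
`E` at `w0`, where `Dts` records the derived term of each derived formula of
`E` and `r` is the derived term of `claim E`. -/
noncomputable def learnStar (M : Frame) (w0 : M.W) (E : Expl)
    (Dts : List (PropForm × Tm)) (r : Tm) : Fin 2 → Tm → M.W → Set PropForm :=
  fun i t w =>
    if i = 1 ∧ w = w0 then
      M.star i t w ∪ {F | (F, t) ∈ Dts} ∪
        {G | ∃ s : Tm, G ∈ M.star i s w ∧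
          (t = Tm.subst (E.claim, []) r s ∨ t = Tm.subst (E.claim, E.hyps) r s)}
    else M.star i t w

/-- The model `M|(2, w0, E)` after agent 2 learns from explanation `E`. -/
noncomputable def learnModel (M : Frame) (w0 : M.W) (E : Expl)
    (Dts : List (PropForm × Tm)) (r : Tm) : Frame :=
  { M with star := learnStar M w0 E Dts r }

/-- `Dts` and `r` are genuine derived-term data for `E`: every entry of `Dts`
is a derived term of a derived formula of `E`, every derived formula of `E`
has its derived term recorded in `Dts`, `r` is a derived term of `claim E`
w.r.t. `E`, and (when `E` is not a single hypothesis) `r` is the recorded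
derived term of `claim E`. -/
def GoodDerived (M : Frame) (w : M.W) (E : Expl)
    (Dts : List (PropForm × Tm)) (r : Tm) : Prop :=
  DTerm M 1 w E r ∧
  (∀ p ∈ Dts, ∃ sub ∈ E.subtrees, sub.children ≠ [] ∧ sub.claim = p.1 ∧
      DTerm M 1 w sub p.2) ∧
  (∀ sub ∈ E.subtrees, sub.children ≠ [] →
      ∃ t : Tm, (sub.claim, t) ∈ Dts ∧ DTerm M 1 w sub t) ∧
  (E.children ≠ [] → (E.claim, r) ∈ Dts)

/-- Restriction of a model to a set of worlds (update by a set of worlds). -/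
def Frame.restrict (M : Frame) (X : Set M.W) (hne : X.Nonempty) : Frame where
  W := X
  ne := hne.to_subtype
  R i u v := M.R i u.1 v.1
  refl i u := M.refl i u.1
  trans i _ _ _ h1 h2 := M.trans i h1 h2
  star i t u := M.star i t u.1
  val n := {u | u.1 ∈ M.val n}

/-- The feedback value of agent 2 on a node of an explanation: a hypothesis
gets value 1 iff agent 2 can justify it by a ground term; a derived formula
gets value 1 iff agent 2 understands the subexplanation rooted at it. -/
def FVal (M : Frame) (w : M.W) : Expl → Prop
  | .node [] A => ∃ t : Tm, t.Ground ∧ A ∈ M.star 1 t w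
  | .node (c :: cs) B => Understands M w (.node (c :: cs) B)

/-- The truth set by which agent 1 updates upon receiving agent 2's feedback
on the node `sub` of an explanation. -/
noncomputable def Uset (M : Frame) (w : M.W) : Expl → Set M.W
  | .node [] A =>
      if FVal M w (.node [] A) then {u | ∃ t : Tm, t.Ground ∧ A ∈ M.star 1 t u}
      else {u | ¬ ∃ t : Tm, t.Ground ∧ A ∈ M.star 1 t u}
  | .node (c :: cs) B =>
      if FVal M w (.node (c :: cs) B) then
        {u | ∃ t : Tm, t.Ground ∧ bigImp ((c :: cs).map Expl.claim) B ∈ M.star 1 t u}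
      else if ∀ c' ∈ c :: cs, FVal M w c' then
        {u | ¬ ∃ t : Tm, t.Ground ∧ bigImp ((c :: cs).map Expl.claim) B ∈ M.star 1 t u}
      else Set.univ

/-- The combined truth set of the series of updates by agent 2's feedback on
all nodes of explanation `E`. -/
noncomputable def FeedbackSet (M : Frame) (w : M.W) (E : Expl) : Set M.W :=
  {u | ∀ sub ∈ E.subtrees, u ∈ Uset M w sub}

/-- Agent 1 is not sure whether agent 2 can justify `F`:  ¬□₁△₂F. -/
def NotSure (M : Frame) (w : M.W) (F : PropForm) : Prop :=
  ¬ ∀ u, M.R 0 w u → ∃ t : Tm, t.Ground ∧ F ∈ M.star 1 t u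

/-- `N(E)`: the hypotheses and deduction steps of `E` that agent 1 is not
sure agent 2 can justify. -/
def Nset (M : Frame) (w : M.W) (E : Expl) : Set PropForm :=
  {F | (F ∈ E.hyps ∧ NotSure M w F) ∨
       ∃ p ∈ E.steps, p.2 = F ∧ NotSure M w (bigImp p.1 p.2)}

/-- The preference relation over explanations: `Pref M w E E'` means
`E ≾ E'` (`E'` is at least as preferred as `E`). -/
def Pref (M : Frame) (w : M.W) (E E' : Expl) : Prop :=
  (Nset M w E).ncard > (Nset M w E').ncard ∨
  ((Nset M w E).ncard = (Nset M w E').ncard ∧ E.dset.ncard ≥ E'.dset.ncard)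

/-- `E` is available for agent 1 (index 0) to agent 2 (index 1) at `w`. -/
def Available (M : Frame) (w : M.W) (E : Expl) : Prop :=
  (∀ A ∈ E.hyps, ∃ t : Tm, t.Ground ∧ A ∈ M.star 0 t w) ∧
  (∀ sub ∈ E.subtrees, sub.children ≠ [] →
      ∃ s : Tm, s.Ground ∧ DTerm M 0 w sub s ∧ sub.claim ∈ M.star 0 s w) ∧
  (∀ A ∈ E.hyps, ¬ ∀ u, M.R 0 w u → ¬ ∃ t : Tm, t.Ground ∧ A ∈ M.star 1 t u) ∧
  (∀ p ∈ E.steps,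
      ¬ ∀ u, M.R 0 w u → ¬ ∃ t : Tm, t.Ground ∧ bigImp p.1 p.2 ∈ M.star 1 t u)

/-- `λ(A, F)`: available explanations proving `F` from hypotheses `A`. -/
def lam (M : Frame) (w : M.W) (A : List PropForm) (F : PropForm) : Set Expl :=
  {E | E.claim = F ∧ (A ≠ [] → ∀ x, x ∈ E.hyps ↔ x ∈ A) ∧ Available M w E}

/-- `why(𝓕(E))`: the nodes of `E` with feedback value 0 all of whose
premises have feedback value 1. -/
def whySet (M : Frame) (w : M.W) (E : Expl) : Set Expl :=
  {sub | sub ∈ E.subtrees ∧ ¬ FVal M w sub ∧ ∀ c ∈ sub.children, FVal M w c}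

/-- The candidate explanations after feedback on `prev`: available
explanations for the initial claim `F` together with available explanations
for the formulas agent 2 asked about. -/
def Cands (M : Frame) (w : M.W) (F : PropForm) (prev : Expl) : Set Expl :=
  lam M w [] F ∪
    {E' | ∃ sub ∈ whySet M w prev,
        E' ∈ lam M w (sub.children.map Expl.claim) sub.claim}

/-- Most preferred explanations in a set of candidates. -/
def MostPref (M : Frame) (w : M.W) (X : Set Expl) (E : Expl) : Prop :=
  E ∈ X ∧ ∀ E' ∈ X, Pref M w E' E

/-- A state of the conversation: a model together with the actual world. -/
abbrev ConvState := Σ N : Frame, N.W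

/-- Agent 2 learns from explanation `E` (an update of the model). -/
def ExplStep (p q : ConvState) (E : Expl) : Prop :=
  ∃ (Dts : List (PropForm × Tm)) (r : Tm),
    GoodDerived p.1 p.2 E Dts r ∧ q = ⟨learnModel p.1 p.2 E Dts r, p.2⟩

/-- Agent 1 learns from agent 2's (truthful) feedback on `E`. -/
def FbStep (p q : ConvState) (E : Expl) : Prop :=
  ∃ hw : p.2 ∈ FeedbackSet p.1 p.2 E,
    q = ⟨p.1.restrict (FeedbackSet p.1 p.2 E) ⟨p.2, hw⟩, ⟨p.2, hw⟩⟩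

/-- One round of the conversation: an explanation followed by feedback. -/
def RoundStep (p q : ConvState) (E : Expl) : Prop :=
  ∃ mid : ConvState, ExplStep p mid E ∧ FbStep mid q E


/-!
Agent 1's evidence at the actual world never changes and agent 2's ground justifications there
only grow, so `E₀` stays available and understood, and agent 1 always has a most preferred
candidate. Call a formula that agent 1 can justify *resolved* once agent 2 justifies it or agent 1
believes agent 2 cannot; there are finitely many such formulas, and resolution is never undone.
Availability means that the nodes of a candidate which agent 2 cannot justify are unresolved, so a
round on an explanation agent 2 does not understand yet resolves one of its nodes: by learning, or
by truthful negative feedback on a node of `why(𝓕(E))`. A round on an explanation agent 2 already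
understands ends the conversation if its claim is `F`, and otherwise leaves only explanations of `F`
as candidates.
-/

namespace Expl

theorem induction_on {P : Expl → Prop}
    (h : ∀ cs B, (∀ c ∈ cs, P c) → P (.node cs B)) : ∀ E, P E
  | .node cs B => h cs B fun c _ => induction_on h c

theorem mem_subtrees_node {s : Expl} {cs : List Expl} {B : PropForm} :
    s ∈ (node cs B).subtrees ↔ s = node cs B ∨ ∃ c ∈ cs, s ∈ c.subtrees := by
  rw [subtrees]
  simp

theorem forall_mem_subtrees_node {P : Expl → Prop} {cs : List Expl} {B : PropForm} :
    (∀ s ∈ (node cs B).subtrees, P s) ↔ P (node cs B) ∧ ∀ c ∈ cs, ∀ s ∈ c.subtrees, P s := by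
  simp only [mem_subtrees_node]
  aesop

theorem mem_subtrees_self (E : Expl) : E ∈ E.subtrees := by
  cases E
  exact mem_subtrees_node.mpr (Or.inl rfl)

theorem mem_subtrees_trans {E s t : Expl} (hs : s ∈ E.subtrees) (ht : t ∈ s.subtrees) :
    t ∈ E.subtrees := by
  induction E using induction_on with
  | h cs B ih =>
    rcases mem_subtrees_node.mp hs with rfl | ⟨c, hc, hs⟩
    · exact ht
    · exact mem_subtrees_node.mpr (Or.inr ⟨c, hc, ih c hc hs⟩)

theorem mem_hyps_iff {E : Expl} {A : PropForm} : A ∈ E.hyps ↔ node [] A ∈ E.subtrees := by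
  induction E using induction_on with
  | h cs B ih =>
    rcases cs with _ | ⟨c, cs⟩
    · rw [hyps, mem_subtrees_node]
      simp
    · rw [hyps, mem_subtrees_node]
      simp only [List.flatMap_subtype, List.unattach_attach, List.mem_flatMap, node.injEq,
        reduceCtorEq, false_and, false_or]
      exact exists_congr fun c => and_congr_right fun hc => ih c hc

theorem mem_steps_iff {E : Expl} {L : List PropForm} {B : PropForm} :
    (L, B) ∈ E.steps ↔ ∃ cs, cs ≠ [] ∧ cs.map claim = L ∧ node cs B ∈ E.subtrees := by
  induction E using induction_on with
  | h ds C ih =>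
    rcases ds with _ | ⟨d, ds⟩
    · rw [steps]
      simp [mem_subtrees_node]
    · rw [steps]
      simp only [List.flatMap_subtype, List.mem_cons, List.mem_flatMap, mem_subtrees_node]
      aesop

/-- The formula agent 2 has to justify at a node. -/
def keyForm : Expl → PropForm
  | .node [] A => A
  | .node (c :: cs) B => bigImp ((c :: cs).map claim) B

theorem keyForm_node {cs : List Expl} (hcs : cs ≠ []) (B : PropForm) :
    (node cs B).keyForm = bigImp (cs.map claim) B := by
  rcases cs with _ | ⟨c, cs⟩
  · exact absurd rfl hcs
  · rfl

end Expl

theorem Tm.ground_foldl_app {d : Tm} {ts : List Tm} :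
    (ts.foldl Tm.app d).Ground ↔ d.Ground ∧ ∀ t ∈ ts, t.Ground := by
  induction ts generalizing d with
  | nil => simp
  | cons t ts ih =>
    rw [List.foldl_cons, ih]
    simp only [Tm.Ground, List.mem_cons, forall_eq_or_imp, and_assoc]

theorem List.Forall₂.forall_mem_iff {α β : Type*} {R : α → β → Prop} {P : α → Prop}
    {Q : β → Prop} {l₁ : List α} {l₂ : List β} (h : List.Forall₂ R l₁ l₂)
    (hPQ : ∀ a ∈ l₁, ∀ b, R a b → (P a ↔ Q b)) :
    (∀ a ∈ l₁, P a) ↔ ∀ b ∈ l₂, Q b := by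
  induction h with
  | nil => simp
  | cons hab _ ih =>
    simp only [List.mem_cons, forall_eq_or_imp] at hPQ ⊢
    exact and_congr (hPQ.1 _ hab) (ih hPQ.2)

namespace Frame

def Justifies (N : Frame) (i : Fin 2) (w : N.W) (G : PropForm) : Prop :=
  ∃ t : Tm, t.Ground ∧ G ∈ N.star i t w

theorem FinEv.finite_justifies {N : Frame} (hN : N.FinEv) (i : Fin 2) (w : N.W) :
    {G | N.Justifies i w G}.Finite := by
  refine ((hN.1 i w).biUnion fun t ht => hN.2 i t w ht.1).subset ?_
  rintro G ⟨t, ht, hG⟩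
  exact Set.mem_biUnion ⟨ht, G, hG⟩ hG

end Frame

namespace DTerm

variable {N : Frame} {i : Fin 2} {w : N.W}

theorem exists_dterm (N : Frame) (i : Fin 2) (w : N.W) (E : Expl) : ∃ t, DTerm N i w E t := by
  induction E using Expl.induction_on with
  | h cs B ih =>
    rcases cs with _ | ⟨c, cs⟩
    · by_cases hB : N.Justifies i w B
      · obtain ⟨t, ht, hBt⟩ := hB
        exact ⟨t, hyp_just ht hBt⟩
      · exact ⟨_, hyp_var hB⟩
    · by_cases hstep : N.Justifies i w (bigImp ((c :: cs).map Expl.claim) B)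
      · obtain ⟨d, hd, hdstep⟩ := hstep
        have : Nonempty Tm := ⟨.const 0⟩
        choose! pick hpick using ih
        have hts : List.Forall₂ (DTerm N i w) (c :: cs) ((c :: cs).map pick) :=
          List.forall₂_map_right_iff.mpr (List.forall₂_same.mpr hpick)
        exact ⟨_, step (List.cons_ne_nil c cs) hd hdstep hts.length_eq.symm hts⟩
      · exact ⟨_, step_var (List.cons_ne_nil c cs) hstep⟩

theorem ground_iff {E : Expl} {t : Tm} (h : DTerm N i w E t) :
    t.Ground ↔ ∀ s ∈ E.subtrees, N.Justifies i w s.keyForm := by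
  induction E using Expl.induction_on generalizing t with
  | h cs B ih =>
    rw [Expl.forall_mem_subtrees_node]
    cases h with
    | hyp_just ht hBt => simpa [ht, Expl.keyForm] using ⟨t, ht, hBt⟩
    | hyp_var hB => exact iff_of_false id fun h => hB h.1
    | step hne hd hdstep _ hts =>
      rw [Tm.ground_foldl_app, Expl.keyForm_node hne, ← (hts.forall_mem_iff
        fun c hc t htc => (ih c hc htc).symm)]
      simp only [hd, true_and, show N.Justifies i w _ from ⟨_, hd, hdstep⟩]
    | step_var hne hstep =>
      exact iff_of_false id fun h => hstep (Expl.keyForm_node hne B ▸ h.1)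

theorem of_star_eq {N' : Frame} {w' : N'.W} (hstar : ∀ t, N'.star i t w' = N.star i t w)
    {E : Expl} {t : Tm} (h : DTerm N i w E t) : DTerm N' i w' E t := by
  induction E using Expl.induction_on generalizing t with
  | h cs B ih =>
    cases h with
    | hyp_just ht hBt => exact hyp_just ht ((hstar _).symm ▸ hBt)
    | hyp_var hB => exact hyp_var (by simpa [Frame.Justifies, hstar] using hB)
    | step hne hd hdstep hlen hts =>
      exact step hne hd ((hstar _).symm ▸ hdstep) hlen
        (((List.forall₂_and_left _ _).mpr ⟨ih, hts⟩).imp fun _ _ h => h.1 h.2)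
    | step_var hne hstep => exact step_var hne (by simpa [Frame.Justifies, hstar] using hstep)

end DTerm

section Understanding

variable {N : Frame} {w : N.W}

theorem understands_iff {E : Expl} :
    Understands N w E ↔ ∀ s ∈ E.subtrees, N.Justifies 1 w s.keyForm := by
  obtain ⟨t, ht⟩ := DTerm.exists_dterm N 1 w E
  refine ⟨fun ⟨t', ht', hg⟩ => ht'.ground_iff.mp hg, fun h => ⟨t, ht, ht.ground_iff.mpr h⟩⟩

theorem understands_node_iff {cs : List Expl} {B : PropForm} :
    Understands N w (.node cs B) ↔
      N.Justifies 1 w (Expl.node cs B).keyForm ∧ ∀ c ∈ cs, Understands N w c := by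
  simp only [understands_iff, Expl.forall_mem_subtrees_node]

theorem Understands.of_mem_subtrees {E s : Expl} (hE : Understands N w E)
    (hs : s ∈ E.subtrees) : Understands N w s :=
  understands_iff.mpr fun _ ht => understands_iff.mp hE _ (Expl.mem_subtrees_trans hs ht)

theorem Understands.mono {N' : Frame} {w' : N'.W} {E : Expl} (hE : Understands N w E)
    (hJ : ∀ G, N.Justifies 1 w G → N'.Justifies 1 w' G) : Understands N' w' E :=
  understands_iff.mpr fun s hs => hJ _ (understands_iff.mp hE s hs)

theorem fVal_iff_understands {E : Expl} : FVal N w E ↔ Understands N w E := by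
  rcases E with ⟨_ | ⟨c, cs⟩, B⟩
  · simp only [understands_iff, Expl.forall_mem_subtrees_node, List.not_mem_nil,
      IsEmpty.forall_iff, implies_true, and_true]
    rfl
  · rfl

/-- The node `s` belongs to `why(𝓕(E))`. -/
theorem exists_why_node {E : Expl} (hE : ¬ Understands N w E) :
    ∃ s ∈ E.subtrees, ¬ N.Justifies 1 w s.keyForm ∧ ∀ c ∈ s.children, Understands N w c := by
  induction E using Expl.induction_on with
  | h cs B ih =>
    by_cases hcs : ∀ c ∈ cs, Understands N w c
    · exact ⟨_, Expl.mem_subtrees_self _, fun h => hE (understands_node_iff.mpr ⟨h, hcs⟩), hcs⟩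
    · push Not at hcs
      obtain ⟨c, hc, hnc⟩ := hcs
      obtain ⟨s, hs, hsJ, hsc⟩ := ih c hc hnc
      exact ⟨s, Expl.mem_subtrees_node.mpr (Or.inr ⟨c, hc, hs⟩), hsJ, hsc⟩

end Understanding

section Availability

variable {N : Frame} {w : N.W} {E : Expl}

theorem Available.justifies_keyForm (hE : Available N w E) {s : Expl}
    (hs : s ∈ E.subtrees) : N.Justifies 0 w s.keyForm := by
  rcases s with ⟨_ | ⟨c, cs⟩, B⟩
  · exact hE.1 B (Expl.mem_hyps_iff.mpr hs)
  · obtain ⟨t, ht, hdt, -⟩ := hE.2.1 _ hs (List.cons_ne_nil c cs)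
    exact (hdt.ground_iff.mp ht) _ (Expl.mem_subtrees_self _)

theorem Available.not_forall_not_justifies (hE : Available N w E) {s : Expl}
    (hs : s ∈ E.subtrees) : ¬ ∀ u, N.R 0 w u → ¬ N.Justifies 1 u s.keyForm := by
  rcases s with ⟨_ | ⟨c, cs⟩, B⟩
  · exact hE.2.2.1 B (Expl.mem_hyps_iff.mpr hs)
  · exact hE.2.2.2 (_, B) (Expl.mem_steps_iff.mpr ⟨_, List.cons_ne_nil c cs, rfl, hs⟩)

theorem Available.of_understands {N' : Frame} {w' : N'.W} (hE : Available N w E)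
    (hstar : ∀ t, N'.star 0 t w' = N.star 0 t w) (hund : Understands N' w' E) :
    Available N' w' E := by
  have hJ : ∀ s ∈ E.subtrees, ¬ ∀ u, N'.R 0 w' u → ¬ N'.Justifies 1 u s.keyForm :=
    fun s hs hno => hno w' (N'.refl 0 w') (understands_iff.mp hund s hs)
  refine ⟨fun A hA => ?_, fun s hs hne => ?_, fun A hA => ?_, fun p hp => ?_⟩
  · simpa only [Frame.Justifies, hstar] using hE.1 A hA
  · obtain ⟨t, ht, hdt, hclaim⟩ := hE.2.1 s hs hne
    exact ⟨t, ht, hdt.of_star_eq hstar, (hstar t).symm ▸ hclaim⟩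
  · exact hJ _ (Expl.mem_hyps_iff.mp hA)
  · obtain ⟨cs, hne, hcs, hs⟩ := Expl.mem_steps_iff.mp hp
    simpa only [Expl.keyForm_node hne, hcs, Frame.Justifies] using hJ _ hs

end Availability

section Feedback

variable {N : Frame} {w : N.W}

theorem mem_uset_self (s : Expl) : w ∈ Uset N w s := by
  rcases s with ⟨_ | ⟨c, cs⟩, B⟩
  · rw [Uset]
    split_ifs with h
    exacts [h, h]
  · rw [Uset]
    split_ifs with h hcs
    · exact understands_iff.mp (fVal_iff_understands.mp h) _ (Expl.mem_subtrees_self _)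
    · exact fun hJ => h (fVal_iff_understands.mpr (understands_node_iff.mpr
        ⟨hJ, fun c hc => fVal_iff_understands.mp (hcs c hc)⟩))
    · trivial

theorem mem_feedbackSet_self (E : Expl) : w ∈ FeedbackSet N w E :=
  fun s _ => mem_uset_self s

theorem uset_eq_of_not_justifies {s : Expl} (hs : ¬ N.Justifies 1 w s.keyForm)
    (hc : ∀ c ∈ s.children, Understands N w c) :
    Uset N w s = {u | ¬ N.Justifies 1 u s.keyForm} := by
  rcases s with ⟨_ | ⟨c, cs⟩, B⟩
  · rw [Uset, if_neg (show ¬ FVal N w (.node [] B) from hs)]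
    rfl
  · have hF : ¬ FVal N w (.node (c :: cs) B) := fun h =>
      hs ((understands_node_iff.mp (fVal_iff_understands.mp h)).1)
    rw [Uset, if_neg hF, if_pos (show ∀ c' ∈ c :: cs, FVal N w c' from
      fun c' hc' => fVal_iff_understands.mpr (hc c' hc'))]
    rfl

/-- Truthful negative feedback on a node of `why(𝓕(E))` tells agent 1 that agent 2 cannot
justify it. -/
theorem exists_not_justifies_of_mem_feedbackSet {E : Expl} (hE : ¬ Understands N w E) :
    ∃ s ∈ E.subtrees, ∀ u ∈ FeedbackSet N w E, ¬ N.Justifies 1 u s.keyForm := by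
  obtain ⟨s, hs, hsJ, hsc⟩ := exists_why_node hE
  refine ⟨s, hs, fun u hu => ?_⟩
  have hus := hu s hs
  rwa [uset_eq_of_not_justifies hsJ hsc] at hus

end Feedback

section Learning

variable {N : Frame} {w : N.W} {E : Expl} {Dts : List (PropForm × Tm)} {r : Tm}

theorem learnStar_zero (t : Tm) (u : N.W) : learnStar N w E Dts r 0 t u = N.star 0 t u :=
  if_neg fun h => absurd h.1 (by decide)

theorem learnStar_of_ne {u : N.W} (hu : u ≠ w) (i : Fin 2) (t : Tm) :
    learnStar N w E Dts r i t u = N.star i t u :=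
  if_neg fun h => hu h.2

theorem star_subset_learnStar (i : Fin 2) (t : Tm) (u : N.W) :
    N.star i t u ⊆ learnStar N w E Dts r i t u := by
  unfold learnStar
  split_ifs
  exacts [fun G hG => Or.inl (Or.inl hG), le_rfl]

theorem exists_goodDerived (N : Frame) (w : N.W) (E : Expl) :
    ∃ Dts r, GoodDerived N w E Dts r := by
  choose pick hpick using DTerm.exists_dterm N 1 w
  have hmem : ∀ s ∈ E.subtrees, s.children ≠ [] →
      (s.claim, pick s) ∈ (E.subtrees.filter fun s => s.children ≠ []).map
        fun s => (s.claim, pick s) :=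
    fun s hs hne => List.mem_map.mpr ⟨s, List.mem_filter.mpr ⟨hs, by simpa using hne⟩, rfl⟩
  refine ⟨_, pick E, hpick E, ?_, fun s hs hne => ⟨pick s, hmem s hs hne, hpick s⟩,
    hmem E (Expl.mem_subtrees_self E)⟩
  simp only [List.mem_map, List.mem_filter]
  rintro _ ⟨s, ⟨hs, hne⟩, rfl⟩
  exact ⟨s, hs, by simpa using hne, rfl, hpick s⟩

theorem GoodDerived.justifies_claim (h : GoodDerived N w E Dts r) (hE : Understands N w E) :
    (learnModel N w E Dts r).Justifies 1 w E.claim := by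
  rcases E with ⟨_ | ⟨c, cs⟩, B⟩
  · obtain ⟨t, ht, hB⟩ := understands_iff.mp hE _ (Expl.mem_subtrees_self _)
    exact ⟨t, ht, star_subset_learnStar 1 t w hB⟩
  · refine ⟨r, h.1.ground_iff.mpr (understands_iff.mp hE), ?_⟩
    show B ∈ learnStar N w _ Dts r 1 r w
    rw [learnStar, if_pos ⟨rfl, rfl⟩]
    exact Or.inl (Or.inr (h.2.2.2 (List.cons_ne_nil c cs)))

end Learning

namespace ConvState

noncomputable def learnData (p : ConvState) (E : Expl) : List (PropForm × Tm) × Tm :=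
  ((exists_goodDerived p.1 p.2 E).choose, (exists_goodDerived p.1 p.2 E).choose_spec.choose)

theorem goodDerived_learnData (p : ConvState) (E : Expl) :
    GoodDerived p.1 p.2 E (p.learnData E).1 (p.learnData E).2 :=
  (exists_goodDerived p.1 p.2 E).choose_spec.choose_spec

noncomputable def learn (p : ConvState) (E : Expl) : ConvState :=
  ⟨learnModel p.1 p.2 E (p.learnData E).1 (p.learnData E).2, p.2⟩

noncomputable def feedback (p : ConvState) (E : Expl) : ConvState :=
  ⟨p.1.restrict (FeedbackSet p.1 p.2 E) ⟨p.2, mem_feedbackSet_self E⟩,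
    ⟨p.2, mem_feedbackSet_self E⟩⟩

noncomputable def round (p : ConvState) (E : Expl) : ConvState := (p.learn E).feedback E

variable {p : ConvState} {E : Expl} {G : PropForm}

theorem roundStep_round : RoundStep p (p.round E) E :=
  ⟨p.learn E, ⟨_, _, p.goodDerived_learnData E, rfl⟩, mem_feedbackSet_self E, rfl⟩

theorem star_zero_round (t : Tm) : (p.round E).1.star 0 t (p.round E).2 = p.1.star 0 t p.2 :=
  learnStar_zero (w := p.2) (E := E) (Dts := (p.learnData E).1) (r := (p.learnData E).2) t p.2

theorem justifies_round (hG : p.1.Justifies 1 p.2 G) :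
    (p.round E).1.Justifies 1 (p.round E).2 G :=
  let ⟨t, ht, hGt⟩ := hG
  ⟨t, ht, star_subset_learnStar (E := E) (Dts := (p.learnData E).1) (r := (p.learnData E).2)
    1 t p.2 hGt⟩

theorem justifies_claim_round (hE : Understands p.1 p.2 E) :
    (p.round E).1.Justifies 1 (p.round E).2 E.claim :=
  (p.goodDerived_learnData E).justifies_claim hE

/-- Learning only changes agent 2's evidence at the actual world, so what agent 1 believes agent 2
cannot justify elsewhere stays so. -/
theorem forall_not_justifies_round (hG : ∀ u, p.1.R 0 p.2 u → ¬ p.1.Justifies 1 u G)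
    (hGq : ¬ (p.round E).1.Justifies 1 (p.round E).2 G) :
    ∀ u, (p.round E).1.R 0 (p.round E).2 u → ¬ (p.round E).1.Justifies 1 u G := by
  rintro ⟨u, hu⟩ hR ⟨t, ht, hGt⟩
  by_cases huw : u = p.2
  · subst huw
    exact hGq ⟨t, ht, hGt⟩
  · have hGt' : G ∈ learnStar p.1 p.2 E (p.learnData E).1 (p.learnData E).2 1 t u := hGt
    rw [learnStar_of_ne (N := p.1) huw] at hGt'
    exact hG u hR ⟨t, ht, hGt'⟩

theorem understands_or_exists_forall_not_justifies_round :
    Understands (p.round E).1 (p.round E).2 E ∨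
      ∃ s ∈ E.subtrees, ∀ u, ¬ (p.round E).1.Justifies 1 u s.keyForm := by
  by_cases hE : Understands (p.learn E).1 (p.learn E).2 E
  · exact Or.inl (hE.mono fun _ h => h)
  · obtain ⟨s, hs, hno⟩ := exists_not_justifies_of_mem_feedbackSet hE
    exact Or.inr ⟨s, hs, fun u => hno u.1 u.2⟩

def Resolved (p : ConvState) (G : PropForm) : Prop :=
  p.1.Justifies 1 p.2 G ∨ ∀ u, p.1.R 0 p.2 u → ¬ p.1.Justifies 1 u G

def unresolved (p : ConvState) : Set PropForm :=
  {G | p.1.Justifies 0 p.2 G ∧ ¬ p.Resolved G}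

theorem Resolved.round (hG : p.Resolved G) : (p.round E).Resolved G := by
  by_cases hGq : (p.round E).1.Justifies 1 (p.round E).2 G
  · exact Or.inl hGq
  · rcases hG with hJ | hno
    · exact absurd (justifies_round hJ) hGq
    · exact Or.inr (forall_not_justifies_round hno hGq)

theorem unresolved_round_subset : (p.round E).unresolved ⊆ p.unresolved := by
  rintro G ⟨⟨t, ht, hGt⟩, hG⟩
  rw [star_zero_round] at hGt
  exact ⟨⟨t, ht, hGt⟩, fun h => hG h.round⟩

theorem keyForm_mem_unresolved (hE : Available p.1 p.2 E) {s : Expl} (hs : s ∈ E.subtrees)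
    (hJ : ¬ p.1.Justifies 1 p.2 s.keyForm) : s.keyForm ∈ p.unresolved :=
  ⟨hE.justifies_keyForm hs, fun h => h.elim hJ (hE.not_forall_not_justifies hs)⟩

theorem unresolved_round_ssubset (hE : Available p.1 p.2 E) (hnot : ¬ Understands p.1 p.2 E) :
    (p.round E).unresolved ⊂ p.unresolved := by
  refine (Set.ssubset_iff_of_subset unresolved_round_subset).mpr ?_
  rcases understands_or_exists_forall_not_justifies_round (p := p) (E := E) with hq | ⟨s, hs, hno⟩
  · obtain ⟨s, hs, hJ⟩ : ∃ s ∈ E.subtrees, ¬ p.1.Justifies 1 p.2 s.keyForm := by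
      simpa [understands_iff] using hnot
    exact ⟨_, keyForm_mem_unresolved hE hs hJ,
      fun h => h.2 (Or.inl (understands_iff.mp hq s hs))⟩
  · exact ⟨_, keyForm_mem_unresolved hE hs fun h => hno _ (justifies_round h),
      fun h => h.2 (Or.inr fun u _ => hno u)⟩

def Invariant (E0 : Expl) (p : ConvState) : Prop :=
  Available p.1 p.2 E0 ∧ Understands p.1 p.2 E0 ∧ {G | p.1.Justifies 0 p.2 G}.Finite

theorem Invariant.round {E0 : Expl} (h : Invariant E0 p) : Invariant E0 (p.round E) := by
  have hstar : ∀ t, (p.round E).1.star 0 t (p.round E).2 = p.1.star 0 t p.2 := star_zero_round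
  have hund := h.2.1.mono fun _ hG => justifies_round (E := E) hG
  refine ⟨h.1.of_understands hstar hund, hund, h.2.2.subset fun G ⟨t, ht, hGt⟩ => ?_⟩
  exact ⟨t, ht, hstar t ▸ hGt⟩

theorem Invariant.finite_unresolved {E0 : Expl} (h : Invariant E0 p) : p.unresolved.Finite :=
  h.2.2.subset fun _ hG => hG.1

theorem Invariant.mem_lam {E0 : Expl} {F : PropForm} (h : Invariant E0 p) (hc : E0.claim = F) :
    E0 ∈ lam p.1 p.2 [] F :=
  ⟨hc, fun h => absurd rfl h, h.1⟩

end ConvState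

theorem exists_mostPref (N : Frame) (w : N.W) {X : Set Expl} (hX : X.Nonempty) :
    ∃ E, MostPref N w X E := by
  set n := sInf ((fun E => (Nset N w E).ncard) '' X)
  obtain ⟨E₁, hE₁, hn⟩ : n ∈ _ := Nat.sInf_mem (hX.image _)
  set Y := {E | E ∈ X ∧ (Nset N w E).ncard = n}
  obtain ⟨E, ⟨hE, hEn⟩, hd⟩ : sInf ((fun E => E.dset.ncard) '' Y) ∈ _ :=
    Nat.sInf_mem (Set.Nonempty.image _ ⟨E₁, hE₁, hn⟩)
  refine ⟨E, hE, fun E' hE' => ?_⟩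
  rcases (Nat.sInf_le ⟨E', hE', rfl⟩ : n ≤ (Nset N w E').ncard).lt_or_eq with hlt | heq
  · exact Or.inl (hEn ▸ hlt)
  · exact Or.inr ⟨(hEn.trans heq).symm, hd.trans_le (Nat.sInf_le ⟨E', ⟨hE', heq.symm⟩, rfl⟩)⟩

theorem available_of_mem_cands {N : Frame} {w : N.W} {F : PropForm} {prev E : Expl}
    (hE : E ∈ Cands N w F prev) : Available N w E := by
  rcases hE with hE | ⟨_, _, hE⟩
  exacts [hE.2.2, hE.2.2]

/-- Once agent 2 understands `prev`, no node of it asks a question, so only explanations of the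
initial claim remain. -/
theorem claim_eq_of_mem_cands {N : Frame} {w : N.W} {F : PropForm} {prev E : Expl}
    (hprev : Understands N w prev) (hE : E ∈ Cands N w F prev) : E.claim = F := by
  rcases hE with hE | ⟨s, hs, -⟩
  · exact hE.1
  · exact absurd (fVal_iff_understands.mpr (hprev.of_mem_subtrees hs.1)) hs.2.1

/-- The conclusion of `conversation_terminates` from the state `p`, with first candidates `X`. -/
def SuccessfulConversation (F : PropForm) (p : ConvState) (X : Set Expl) : Prop :=
  ∃ (n : ℕ) (Es : ℕ → Expl) (st : ℕ → ConvState),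
    1 ≤ n ∧ st 0 = p ∧
    (∀ k < n, RoundStep (st k) (st (k + 1)) (Es k)) ∧
    MostPref p.1 p.2 X (Es 0) ∧
    (∀ k, 1 ≤ k → k < n →
      MostPref (st k).1 (st k).2 (Cands (st k).1 (st k).2 F (Es (k - 1))) (Es k)) ∧
    (∃ t : Tm, t.Ground ∧ F ∈ (st n).1.star 1 t (st n).2) ∧
    (∀ sub ∈ (Es (n - 1)).subtrees, FVal (st n).1 (st n).2 sub)

namespace SuccessfulConversation

variable {F : PropForm} {p : ConvState} {X : Set Expl} {E : Expl}

theorem single (hmp : MostPref p.1 p.2 X E) (hE : Understands p.1 p.2 E) (hF : E.claim = F) :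
    SuccessfulConversation F p X := by
  refine ⟨1, fun _ => E, fun k => if k = 0 then p else p.round E, le_rfl, rfl,
    fun k hk => ?_, hmp, fun k hk hk' => absurd hk' (by omega), hF ▸ ?_, fun s hs => ?_⟩
  · obtain rfl : k = 0 := by omega
    exact ConvState.roundStep_round
  · exact ConvState.justifies_claim_round hE
  · exact fVal_iff_understands.mpr
      ((hE.mono fun _ hG => ConvState.justifies_round hG).of_mem_subtrees hs)

theorem cons (hmp : MostPref p.1 p.2 X E)
    (h : SuccessfulConversation F (p.round E) (Cands (p.round E).1 (p.round E).2 F E)) :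
    SuccessfulConversation F p X := by
  obtain ⟨n, Es, st, hn, h0, hsteps, hmp0, hmps, hJ, hFV⟩ := h
  obtain ⟨m, rfl⟩ : ∃ m, n = m + 1 := ⟨n - 1, by omega⟩
  refine ⟨m + 2, fun k => if k = 0 then E else Es (k - 1),
    fun k => if k = 0 then p else st (k - 1), by omega, rfl, fun k hk => ?_, hmp,
    fun k hk hk' => ?_, hJ, hFV⟩
  · rcases k with _ | k
    · simpa [h0] using ConvState.roundStep_round
    · simpa using hsteps k (by omega)
  · rcases k with _ | _ | k
    · omega
    · show MostPref (st 0).1 (st 0).2 (Cands (st 0).1 (st 0).2 F E) (Es 0)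
      rw [h0]
      exact hmp0
    · simpa using hmps (k + 1) (by omega) (by omega)

end SuccessfulConversation

open ConvState in
/-- `b = true` allows candidates whose claim is not `F`; `2 * #unresolved + b` drops in every
round. -/
theorem ConvState.Invariant.successfulConversation {E0 : Expl} {F : PropForm} (hc : E0.claim = F) :
    ∀ (m : ℕ) (p : ConvState) (X : Set Expl) (b : Bool), Invariant E0 p →
      2 * p.unresolved.ncard + b.toNat ≤ m → X.Nonempty → (∀ E ∈ X, Available p.1 p.2 E) →
      (b = false → ∀ E ∈ X, E.claim = F) → SuccessfulConversation F p X := by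
  intro m
  induction m using Nat.strong_induction_on with
  | _ m ih =>
  intro p X b hp hm hX hXav hXF
  obtain ⟨E, hmp⟩ := exists_mostPref p.1 p.2 hX
  have hnext : ∀ b', 2 * (p.round E).unresolved.ncard + b'.toNat < m →
      (b' = false → ∀ E' ∈ Cands (p.round E).1 (p.round E).2 F E, E'.claim = F) →
      SuccessfulConversation F p X := fun b' hlt hb' =>
    .cons hmp (ih _ hlt _ _ b' hp.round le_rfl ⟨E0, Or.inl (hp.round.mem_lam hc)⟩
      (fun _ => available_of_mem_cands) hb')
  by_cases hE : Understands p.1 p.2 E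
  · by_cases hF : E.claim = F
    · exact .single hmp hE hF
    · obtain rfl : b = true := by
        cases b
        · exact absurd (hXF rfl E hmp.1) hF
        · rfl
      have := Set.ncard_le_ncard (unresolved_round_subset (E := E)) hp.finite_unresolved
      refine hnext false (by simp only [Bool.toNat_true, Bool.toNat_false] at hm ⊢; omega)
        fun _ _ => claim_eq_of_mem_cands (hE.mono fun _ hG => justifies_round hG)
  · have := Set.ncard_lt_ncard (unresolved_round_ssubset (hXav E hmp.1) hE)
      hp.finite_unresolved
    exact hnext true (by cases b <;> simp only [Bool.toNat_true, Bool.toNat_false] at hm ⊢ <;>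
      omega) nofun

theorem conversation_terminates_general (M : Frame) (hM : M.Modular) (w : M.W)
    (F : PropForm) (E0 : Expl) (hc : E0.claim = F)
    (hund : Understands M w E0) (haw : Available M w E0) :
    ∃ (n : ℕ) (Es : ℕ → Expl) (st : ℕ → ConvState),
      1 ≤ n ∧
      st 0 = ⟨M, w⟩ ∧
      (∀ k < n, RoundStep (st k) (st (k + 1)) (Es k)) ∧
      MostPref (st 0).1 (st 0).2 (lam (st 0).1 (st 0).2 [] F) (Es 0) ∧
      (∀ k, 1 ≤ k → k < n →
        MostPref (st k).1 (st k).2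
          (Cands (st k).1 (st k).2 F (Es (k - 1))) (Es k)) ∧
      (∃ t : Tm, t.Ground ∧ F ∈ (st n).1.star 1 t (st n).2) ∧
      (∀ sub ∈ (Es (n - 1)).subtrees, FVal (st n).1 (st n).2 sub) := by
  have hinv : ConvState.Invariant E0 ⟨M, w⟩ := ⟨haw, hund, hM.2.finite_justifies 0 w⟩
  obtain ⟨n, Es, st, hn, h0, hsteps, hmp0, hmps, hJ, hFV⟩ :=
    hinv.successfulConversation hc _ ⟨M, w⟩ (lam M w [] F) false le_rfl
      ⟨E0, hinv.mem_lam hc⟩ (fun _ hE => hE.2.2) (fun _ _ hE => hE.1)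
  exact ⟨n, Es, st, hn, h0, hsteps, h0 ▸ hmp0, hmps, hJ, hFV⟩

/-- Termination of the conversation.  If there is an
explanation `E₀` for the claim `F` that agent 2 understands and agent 1 is
aware of (i.e., is available), and the set of available explanations for `F`
is finite, then there is a finite conversation — alternating most-preferred
explanations chosen by agent 1 and truthful feedback from agent 2 — after
which agent 2 justifies `F` by a ground term and all nodes of the final
feedback have value 1. -/
theorem conversation_terminates (M : Frame) (hM : M.Modular) (w : M.W)
    (F : PropForm) (E0 : Expl) (hc : E0.claim = F)
    (hund : Understands M w E0) (haw : Available M w E0)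
    (hfin : {E : Expl | E.claim = F ∧ Available M w E}.Finite) :
    ∃ (n : ℕ) (Es : ℕ → Expl) (st : ℕ → ConvState),
      1 ≤ n ∧
      st 0 = ⟨M, w⟩ ∧
      (∀ k < n, RoundStep (st k) (st (k + 1)) (Es k)) ∧
      MostPref (st 0).1 (st 0).2 (lam (st 0).1 (st 0).2 [] F) (Es 0) ∧
      (∀ k, 1 ≤ k → k < n →
        MostPref (st k).1 (st k).2
          (Cands (st k).1 (st k).2 F (Es (k - 1))) (Es k)) ∧
      (∃ t : Tm, t.Ground ∧ F ∈ (st n).1.star 1 t (st n).2) ∧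
      (∀ sub ∈ (Es (n - 1)).subtrees, FVal (st n).1 (st n).2 sub) :=
  conversation_terminates_general M hM w F E0 hc hund haw
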